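/- Let A ∈ ℝ^{n×n} be stable and let K ⊆ ℝ^{r×r} be a nonempty compact set every element of which is stable. Then there exists a constant c > 0 such that for every A_r ∈ K and every M ∈ ℝ^{n×r}, if Z ∈ ℝ^{n×r} satisfies the Sylvester equation A Z + Z A_rᵀ + M = 0, then ‖Z‖_F ≤ c ‖M‖_F. -/

import Mathlib

/-!
If `A Z = Z C` and `A`, `C` have disjoint spectra, then `χ_C(A) Z = Z χ_C(C) = 0`, while `χ_C(A)` is
invertible by the spectral mapping theorem; so `Z = 0`. With `C = -A_rᵀ` this makes the Sylvester
operator `Z ↦ A Z + Z A_rᵀ` injective, hence invertible, for every stable `A_r`. Its inverse depends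
continuously on `A_r`, so its operator norm is bounded on the compact set `K`.
-/

open Matrix Polynomial

/-- A square real matrix is stable if every eigenvalue (as a complex matrix)
has negative real part. -/
def IsStable {r : ℕ} (A : Matrix (Fin r) (Fin r) ℝ) : Prop :=
  ∀ μ ∈ spectrum ℂ (A.map Complex.ofReal), μ.re < 0

/-- The Frobenius norm of a real matrix. -/
noncomputable def frobNorm {m n : ℕ} (M : Matrix (Fin m) (Fin n) ℝ) : ℝ :=
  Real.sqrt (Matrix.trace (Mᵀ * M))

namespace Matrix

section Intertwining

variable {R K m n : Type*} [Fintype m] [DecidableEq m] [Fintype n] [DecidableEq n]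

theorem spectrum_transpose [Field K] (A : Matrix n n K) : spectrum K Aᵀ = spectrum K A := by
  ext μ
  rw [mem_spectrum_iff_isRoot_charpoly, mem_spectrum_iff_isRoot_charpoly, charpoly_transpose]

theorem aeval_mul_eq_mul_aeval_of_mul_eq_mul [CommSemiring R] {A : Matrix m m R}
    {C : Matrix n n R} {Z : Matrix m n R} (h : A * Z = Z * C) (p : R[X]) :
    aeval A p * Z = Z * aeval C p := by
  induction p using Polynomial.induction_on' with
  | add p q hp hq => simp only [map_add, Matrix.add_mul, Matrix.mul_add, hp, hq]
  | monomial k a =>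
    have hpow : A ^ k * Z = Z * C ^ k := by
      induction k with
      | zero => simp
      | succ k ih =>
        rw [pow_succ, pow_succ, Matrix.mul_assoc, h, ← Matrix.mul_assoc, ih, Matrix.mul_assoc]
    simp only [aeval_monomial, Algebra.algebraMap_eq_smul_one, smul_mul_assoc, one_mul,
      Matrix.smul_mul, Matrix.mul_smul, hpow]

theorem eq_zero_of_mul_eq_mul_of_disjoint_spectrum [Field K] [IsAlgClosed K]
    {A : Matrix m m K} {C : Matrix n n K} {Z : Matrix m n K} (h : A * Z = Z * C)
    (hAC : Disjoint (spectrum K A) (spectrum K C)) : Z = 0 := by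
  cases isEmpty_or_nonempty n
  · exact Subsingleton.elim _ _
  have hunit : IsUnit (aeval A C.charpoly) := by
    rw [← spectrum.zero_notMem_iff K, spectrum.map_polynomial_aeval_of_degree_pos A _
      (by simp [charpoly_degree_eq_dim, Fintype.card_pos])]
    rintro ⟨μ, hμA, hμC⟩
    exact hAC.notMem_of_mem_left hμA (mem_spectrum_iff_isRoot_charpoly.2 hμC)
  have hkill : aeval A C.charpoly * Z = 0 := by
    rw [aeval_mul_eq_mul_aeval_of_mul_eq_mul h, aeval_self_charpoly, Matrix.mul_zero]
  have := hunit.invertible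
  exact mul_right_injective_of_invertible _ (hkill.trans (Matrix.mul_zero _).symm)

end Intertwining

section Sylvester

variable {R m n : Type*} [CommRing R] [Fintype m] [Fintype n]

def sylvester (A : Matrix m m R) (B : Matrix n n R) :
    Matrix m n R →ₗ[R] Matrix m n R :=
  mulLeftLinearMap n R A + mulRightLinearMap m R Bᵀ

@[simp]
theorem sylvester_apply (A : Matrix m m R) (B : Matrix n n R) (Z : Matrix m n R) :
    sylvester A B Z = A * Z + Z * Bᵀ := rfl

end Sylvester

end Matrix

theorem IsStable.sylvester_injective {n r : ℕ} {A : Matrix (Fin n) (Fin n) ℝ}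
    {B : Matrix (Fin r) (Fin r) ℝ} (hA : IsStable A) (hB : IsStable B) :
    Function.Injective (sylvester A B) := by
  rw [← LinearMap.ker_eq_bot, LinearMap.ker_eq_bot']
  intro Z hZ
  have hdisj : Disjoint (spectrum ℂ (A.map Complex.ofReal))
      (spectrum ℂ (-(B.map Complex.ofReal)ᵀ)) := by
    rw [← spectrum.neg_eq, spectrum_transpose, Set.disjoint_left]
    intro μ hμA hμB
    have hre := hA μ hμA
    have hre_neg := hB (-μ) hμB
    rw [Complex.neg_re] at hre_neg
    linarith
  have hcomm : A.map Complex.ofReal * Z.map Complex.ofReal =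
      Z.map Complex.ofReal * -(B.map Complex.ofReal)ᵀ := by
    have hAZ : A * Z = -(Z * Bᵀ) := eq_neg_of_add_eq_zero_left hZ
    calc A.map Complex.ofReal * Z.map Complex.ofReal = (A * Z).map Complex.ofRealHom :=
          (Matrix.map_mul (L := A) (M := Z) (f := Complex.ofRealHom)).symm
      _ = -((Z * Bᵀ).map Complex.ofRealHom) := by
          rw [hAZ]; exact Matrix.map_neg _ Complex.ofReal_neg _
      _ = _ := by rw [Matrix.map_mul, transpose_map, Matrix.mul_neg]; rfl
  have hZ0 := eq_zero_of_mul_eq_mul_of_disjoint_spectrum hcomm hdisj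
  exact Matrix.map_injective Complex.ofReal_injective (hZ0.trans (Matrix.map_zero _ (by simp)).symm)

theorem IsCompact.exists_forall_norm_ring_inverse_le {X R : Type*} [TopologicalSpace X]
    [NormedRing R] [HasSummableGeomSeries R] {K : Set X} {T : X → R} (hK : IsCompact K)
    (hT : ContinuousOn T K) (hunit : ∀ x ∈ K, IsUnit (T x)) :
    ∃ C, ∀ x ∈ K, ‖Ring.inverse (T x)‖ ≤ C := by
  have hcont : ContinuousOn (fun x => ‖Ring.inverse (T x)‖) K := fun x hx =>
    ((hunit x hx).unit_spec ▸ NormedRing.inverse_continuousAt (hunit x hx).unit)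
      |>.comp_continuousWithinAt (hT x hx) |>.norm
  obtain ⟨C, hC⟩ := hK.bddAbove_image hcont
  exact ⟨C, fun x hx => hC ⟨x, hx, rfl⟩⟩

theorem ContinuousLinearMap.norm_le_norm_ring_inverse_mul {𝕜 E : Type*}
    [NontriviallyNormedField 𝕜] [NormedAddCommGroup E] [NormedSpace 𝕜 E] {T : E →L[𝕜] E}
    (hT : IsUnit T) (z : E) :
    ‖z‖ ≤ ‖Ring.inverse T‖ * ‖T z‖ := by
  calc ‖z‖ = ‖(Ring.inverse T * T) z‖ := by rw [Ring.inverse_mul_cancel T hT]; rfl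
    _ ≤ ‖Ring.inverse T‖ * ‖T z‖ := (Ring.inverse T).le_opNorm _

theorem IsCompact.exists_forall_norm_le_mul_norm_apply {X 𝕜 E : Type*} [TopologicalSpace X]
    [NontriviallyNormedField 𝕜] [CompleteSpace 𝕜] [NormedAddCommGroup E] [NormedSpace 𝕜 E]
    [FiniteDimensional 𝕜 E] {K : Set X} {T : X → E →ₗ[𝕜] E} (hK : IsCompact K)
    (hT : ∀ z, ContinuousOn (fun x => T x z) K) (hinj : ∀ x ∈ K, Function.Injective (T x)) :
    ∃ C, ∀ x ∈ K, ∀ z, ‖z‖ ≤ C * ‖T x z‖ := by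
  have := FiniteDimensional.complete 𝕜 E
  have hunit : ∀ x ∈ K, IsUnit (LinearMap.toContinuousLinearMap (T x)) := fun x hx =>
    ContinuousLinearMap.isUnit_iff_bijective.2
      ⟨hinj x hx, LinearMap.injective_iff_surjective.1 (hinj x hx)⟩
  obtain ⟨C, hC⟩ := hK.exists_forall_norm_ring_inverse_le (continuousOn_clm_apply.2 hT) hunit
  refine ⟨C, fun x hx z => ?_⟩
  calc ‖z‖ ≤ _ := ContinuousLinearMap.norm_le_norm_ring_inverse_mul (hunit x hx) z
    _ ≤ C * ‖T x z‖ := mul_le_mul_of_nonneg_right (hC x hx) (norm_nonneg _)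

section Frobenius

attribute [local instance] Matrix.frobeniusNormedAddCommGroup Matrix.frobeniusNormedSpace

theorem frobNorm_eq_norm {m n : ℕ} (M : Matrix (Fin m) (Fin n) ℝ) : frobNorm M = ‖M‖ := by
  simp only [frobNorm, frobenius_norm_def, Real.sqrt_eq_rpow, trace, diag, mul_apply,
    transpose_apply, Real.norm_eq_abs, Real.rpow_two, sq, abs_mul_abs_self]
  rw [Finset.sum_comm]

theorem frobNorm_neg {m n : ℕ} (M : Matrix (Fin m) (Fin n) ℝ) : frobNorm (-M) = frobNorm M := by
  rw [frobNorm_eq_norm, frobNorm_eq_norm, norm_neg]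

theorem exists_forall_frobNorm_le_frobNorm_sylvester {n r : ℕ}
    {A : Matrix (Fin n) (Fin n) ℝ} (hA : IsStable A)
    {K : Set (Matrix (Fin r) (Fin r) ℝ)} (hK : IsCompact K) (hKstable : ∀ B ∈ K, IsStable B) :
    ∃ C, ∀ B ∈ K, ∀ Z, frobNorm Z ≤ C * frobNorm (sylvester A B Z) := by
  simp only [frobNorm_eq_norm]
  refine hK.exists_forall_norm_le_mul_norm_apply (fun Z => ?_)
    fun B hB => hA.sylvester_injective (hKstable B hB)
  exact (by fun_prop : Continuous fun B : Matrix (Fin r) (Fin r) ℝ => A * Z + Z * Bᵀ).continuousOn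

end Frobenius

theorem sylvester_uniform_bound_general {n r : ℕ}
    (A : Matrix (Fin n) (Fin n) ℝ) (hA : IsStable A)
    (K : Set (Matrix (Fin r) (Fin r) ℝ))
    (hKcpt : IsCompact K) (hKstable : ∀ M ∈ K, IsStable M) :
    ∃ c > (0 : ℝ), ∀ A_r ∈ K, ∀ M Z : Matrix (Fin n) (Fin r) ℝ,
      A * Z + Z * A_rᵀ + M = 0 → frobNorm Z ≤ c * frobNorm M := by
  obtain ⟨C, hC⟩ := exists_forall_frobNorm_le_frobNorm_sylvester hA hKcpt hKstable
  refine ⟨max C 1, by positivity, fun B hB M Z hZ => ?_⟩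
  have hM : sylvester A B Z = -M := eq_neg_of_add_eq_zero_left hZ
  calc frobNorm Z ≤ C * frobNorm M := by simpa [hM, frobNorm_neg] using hC B hB Z
    _ ≤ max C 1 * frobNorm M := mul_le_mul_of_nonneg_right (le_max_left _ _) (Real.sqrt_nonneg _)

/-- uniform bound on solutions of the Sylvester equation
`A Z + Z A_rᵀ + M = 0` over a compact set `K` of stable matrices `A_r`. -/
theorem sylvester_uniform_bound {n r : ℕ}
    (A : Matrix (Fin n) (Fin n) ℝ) (hA : IsStable A)
    (K : Set (Matrix (Fin r) (Fin r) ℝ)) (hKne : K.Nonempty)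
    (hKcpt : IsCompact K) (hKstable : ∀ M ∈ K, IsStable M) :
    ∃ c > (0 : ℝ), ∀ A_r ∈ K, ∀ M Z : Matrix (Fin n) (Fin r) ℝ,
      A * Z + Z * A_rᵀ + M = 0 → frobNorm Z ≤ c * frobNorm M :=
  sylvester_uniform_bound_general A hA K hKcpt hKstable
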